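/- In the Lambek grammar with lexical types A : s/(s/(s\s)) and B : s (with s atomic and distinguished), for every n ∈ ℕ the sequent Aⁿ B ⊢ s is derivable in the Lambek calculus S_IE; e.g. for n = 2 a derivation has λ-term A(λx. A(λy. x (y B))). -/

import Mathlib

inductive OType (Pr : Type) where
  | atom : Pr → OType Pr
  | over : OType Pr → OType Pr → OType Pr   -- `over β α` is β/α
  | under : OType Pr → OType Pr → OType Pr  -- `under α β` is α\β
deriving DecidableEq

/-- The product-free Lambek calculus S_IE on sequents `Γ ⊢ β` with `Γ` a
nonempty word of types (the lexicon rule replaces each lexical symbol by one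
of its types, so words of lexical symbols are analysed through their type
assignments). -/
inductive Der {Pr : Type} : List (OType Pr) → OType Pr → Prop where
  | ax (α : OType Pr) : Der [α] α
  | introR {Γ : List (OType Pr)} {α β : OType Pr} :
      Γ ≠ [] → Der (Γ ++ [α]) β → Der Γ (.over β α)
  | introL {Γ : List (OType Pr)} {α β : OType Pr} :
      Γ ≠ [] → Der (α :: Γ) β → Der Γ (.under α β)
  | elimR {Γ Δ : List (OType Pr)} {α β : OType Pr} :
      Der Γ (.over β α) → Der Δ α → Der (Γ ++ Δ) β
  | elimL {Γ Δ : List (OType Pr)} {α β : OType Pr} :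
      Der Γ (.under α β) → Der Δ α → Der (Δ ++ Γ) β

/-- Atomic types of the grammar G₂ (only s). -/
inductive At where
  | s
deriving DecidableEq

/-- A : s/(s/(s\s)) -/
def tyA : OType At :=
  .over (.atom .s) (.over (.atom .s) (.under (.atom .s) (.atom .s)))
/-- B : s -/
def tyB : OType At := .atom .s

namespace Der

variable {Pr : Type} {Γ : List (OType Pr)}

theorem append_under {α β : OType Pr} (h : Der Γ α) : Der (Γ ++ [.under α β]) β :=
  elimL (ax _) h

theorem cons_over_over {α β γ : OType Pr} (hΓ : Γ ≠ []) (h : Der (Γ ++ [γ]) β) :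
    Der (.over α (.over β γ) :: Γ) α :=
  elimR (Γ := [_]) (ax _) (introR hΓ h)

theorem append_replicate_under {p : OType Pr} (h : Der Γ p) (k : ℕ) :
    Der (Γ ++ List.replicate k (.under p p)) p := by
  induction k with
  | zero => simpa using h
  | succ k ih => simpa [List.replicate_succ'] using ih.append_under

/-- Each `A = p/(p/(p\p))` is eliminated against a hypothetical `p\p` added on the right
(λ-term `A (λy. …)`), so the induction on `n` must allow any number `k` of trailing `p\p`. -/
theorem replicate_append_replicate {p : OType Pr} (hΓ : Γ ≠ []) (h : Der Γ p) (n k : ℕ) :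
    Der (List.replicate n (.over p (.over p (.under p p))) ++ Γ ++
      List.replicate k (.under p p)) p := by
  induction n generalizing k with
  | zero => simpa using h.append_replicate_under k
  | succ n ih =>
    have hne : List.replicate n (.over p (.over p (.under p p))) ++ Γ ++
        List.replicate k (.under p p) ≠ [] := by simp [hΓ]
    simpa [List.replicate_succ] using
      cons_over_over hne (by simpa [List.replicate_succ'] using ih (k + 1))

end Der

/-- In the Lambek grammar with lexicon A : s/(s/(s\s)) and B : s, for every
n ∈ ℕ the sequent Aⁿ B ⊢ s is derivable in S_IE. -/
theorem AnB_derivable (n : ℕ) :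
    Der (List.replicate n tyA ++ [tyB]) (.atom At.s) := by
  simpa [tyA, tyB] using Der.replicate_append_replicate (List.cons_ne_nil _ _) (Der.ax tyB) n 0
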